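/- Let I be a set and F a filter on I which is the intersection of finitely many ultrafilters on I. Then the finite set of ultrafilters having F as intersection is unique; that is, if U_0 ∩ … ∩ U_{m-1} = V_0 ∩ … ∩ V_{l-1} = F with U_0, …, U_{m-1} distinct ultrafilters and V_0, …, V_{l-1} distinct ultrafilters, then {U_0, …, U_{m-1}} = {V_0, …, V_{l-1}}. Moreover, the cardinality n of this unique set is the least natural number n such that for every partition of I into n+1 subsets J_0, …, J_n, at least one m ≤ n has I − J_m ∈ F. -/

import Mathlib

universe u

open Function

/-!
Inside the lattice of filters, an ultrafilter lies below a finite supremum (i.e. contains a finite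
intersection of filters) only if it lies below one of its terms, so the ultrafilters below
`F = U₀ ⊔ ⋯ ⊔ U_{m-1}` are exactly the `Uᵢ`; this determines the set `{Uᵢ}` from `F`.
A partition of `I` into `m + 1` parts has a part belonging to none of the `m` ultrafilters,
and its complement then lies in `F`. Conversely, distinct ultrafilters are disjoint filters, so
they are witnessed by pairwise disjoint sets `Aᵢ ∈ Uᵢ`; for `n < m`, enlarging `A₀, …, Aₙ` to a
partition gives one in which every part lies in some `Uᵢ`, so no complement of a part lies in `F`.
-/

/-- The part `s₀` also absorbs the points lying in no `A s`. -/
theorem Pairwise.exists_partition_superset {α κ : Type*} {A : κ → Set α}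
    (hA : Pairwise (Disjoint on A)) (s₀ : κ) :
    ∃ J : κ → Set α, Pairwise (Disjoint on J) ∧ ⋃ s, J s = Set.univ ∧ ∀ s, A s ⊆ J s := by
  classical
  have hrest : ∀ s ≠ s₀, Disjoint (A s) (A s₀ ∪ (⋃ t, A t)ᶜ) := fun s hs =>
    (hA hs).union_right (Set.disjoint_compl_right_iff_subset.mpr (Set.subset_iUnion A s))
  refine ⟨update A s₀ (A s₀ ∪ (⋃ t, A t)ᶜ), fun s t hst => ?_, ?_, fun s => ?_⟩
  · rcases eq_or_ne s s₀ with rfl | hs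
    · simpa [onFun, update_of_ne hst.symm] using (hrest t hst.symm).symm
    rcases eq_or_ne t s₀ with rfl | ht
    · simpa [onFun, update_of_ne hs] using hrest s hs
    · simpa [onFun, update_of_ne hs, update_of_ne ht] using hA hst
  · refine Set.eq_univ_of_forall fun x => Set.mem_iUnion.mpr ?_
    by_cases hx : x ∈ ⋃ t, A t
    · obtain ⟨t, ht⟩ := Set.mem_iUnion.mp hx
      rcases eq_or_ne t s₀ with rfl | ht₀
      · exact ⟨t, by simp [ht]⟩
      · exact ⟨t, by simpa [update_of_ne ht₀] using ht⟩
    · exact ⟨s₀, by rw [update_self]; exact Or.inr hx⟩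
  · rcases eq_or_ne s s₀ with rfl | hs
    · simp
    · simp [update_of_ne hs]

namespace Ultrafilter

variable {α ι κ : Type*}

theorem le_iSup_iff [Finite ι] {u : Ultrafilter α} {f : ι → Filter α} :
    ↑u ≤ ⨆ i, f i ↔ ∃ i, ↑u ≤ f i := by
  refine ⟨fun h => ?_, fun ⟨i, hi⟩ => le_iSup_of_le i hi⟩
  by_contra! hnot
  choose s hsf hsu using fun i => Filter.not_le.mp (hnot i)
  have hmem : (⋃ i, s i) ∈ ⨆ i, f i :=
    Filter.mem_iSup.mpr fun i => Filter.mem_of_superset (hsf i) (Set.subset_iUnion s i)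
  obtain ⟨i, hi⟩ :=
    eventually_exists_iff.mp (Filter.mem_of_superset (h hmem) fun _ => Set.mem_iUnion.mp)
  exact hsu i hi

theorem le_iSup_coe_iff [Finite ι] {u : Ultrafilter α} {U : ι → Ultrafilter α} :
    ↑u ≤ ⨆ i, (U i : Filter α) ↔ u ∈ Set.range U := by
  simp only [le_iSup_iff, coe_le_coe, Set.mem_range, eq_comm]

theorem pairwise_disjoint_coe {U : ι → Ultrafilter α} (hU : Injective U) :
    Pairwise (Disjoint on fun i => (U i : Filter α)) :=
  fun _ _ hij => disjoint_iff_not_le.mpr fun hle => hij (hU (coe_le_coe.mp hle))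

/-- A part avoided by all `U i` exists by pigeonhole, since each `U i` contains some part. -/
theorem exists_compl_mem_iSup_of_card_lt [Finite ι] [Finite κ] (U : ι → Ultrafilter α)
    {J : κ → Set α} (hJ : Pairwise (Disjoint on J)) (hcover : ⋃ s, J s = Set.univ)
    (hcard : Nat.card ι < Nat.card κ) : ∃ s, (J s)ᶜ ∈ ⨆ i, (U i : Filter α) := by
  have hpart : ∀ i, ∃ s, J s ∈ U i := fun i =>
    eventually_exists_iff.mp <| Filter.Eventually.of_forall fun x =>
      Set.mem_iUnion.mp (hcover.symm ▸ Set.mem_univ x)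
  choose t ht using hpart
  obtain ⟨s, hs⟩ : ∃ s, s ∉ Set.range t := by
    by_contra! hsurj
    exact hcard.not_ge (Nat.card_le_card_of_surjective t hsurj)
  refine ⟨s, Filter.mem_iSup.mpr fun i => Filter.mem_of_superset (ht i) ?_⟩
  exact (hJ fun h => hs ⟨i, h⟩).subset_compl_right

theorem exists_partition_forall_compl_notMem_iSup [Finite ι] [Nonempty κ]
    {U : ι → Ultrafilter α} (hU : Injective U) (e : κ ↪ ι) :
    ∃ J : κ → Set α, Pairwise (Disjoint on J) ∧ ⋃ s, J s = Set.univ ∧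
      ∀ s, (J s)ᶜ ∉ ⨆ i, (U i : Filter α) := by
  obtain ⟨A, hAU, hA⟩ := (pairwise_disjoint_coe hU).exists_mem_filter_of_disjoint
  obtain ⟨J, hJ, hcover, hAJ⟩ :=
    (hA.comp_of_injective e.injective).exists_partition_superset (Classical.arbitrary κ)
  refine ⟨J, hJ, hcover, fun s hs => ?_⟩
  have hJs : J s ∈ U (e s) := Filter.mem_of_superset (hAU (e s)) (hAJ s)
  exact compl_notMem_iff.mpr hJs (Filter.mem_iSup.mp hs (e s))

end Ultrafilter

theorem unique_finite_set_of_ultrafilters_general {I : Type u} (F : Filter I)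
    {m l : ℕ} (U : Fin m → Ultrafilter I) (V : Fin l → Ultrafilter I)
    (hU : Function.Injective U)
    (hFU : F = ⨆ j, (U j : Filter I)) (hFV : F = ⨆ j, (V j : Filter I)) :
    Set.range U = Set.range V ∧
    IsLeast {n : ℕ | ∀ J : Fin (n + 1) → Set I,
        Pairwise (Disjoint on J) → (⋃ s, J s) = Set.univ →
        ∃ s, (J s)ᶜ ∈ F} m := by
  refine ⟨?_, ?_, fun n hn => ?_⟩
  · ext W
    rw [← Ultrafilter.le_iSup_coe_iff, ← Ultrafilter.le_iSup_coe_iff, ← hFU, ← hFV]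
  · intro J hJ hcover
    rw [hFU]
    exact Ultrafilter.exists_compl_mem_iSup_of_card_lt U hJ hcover (by simp)
  · by_contra! hlt
    obtain ⟨J, hJ, hcover, hJF⟩ :=
      Ultrafilter.exists_partition_forall_compl_notMem_iSup hU (Fin.castLEEmb hlt)
    obtain ⟨s, hs⟩ := hn J hJ hcover
    exact hJF s (hFU ▸ hs)

/-- If a filter `F` on `I` is written in two ways as an
intersection of finitely many distinct ultrafilters, the two (finite) sets of
ultrafilters coincide; moreover the cardinality `m` of this unique set is the
least `n` such that every partition of `I` into `n + 1` subsets has a part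
whose complement lies in `F`. -/
theorem unique_finite_set_of_ultrafilters {I : Type u} (F : Filter I)
    {m l : ℕ} (U : Fin m → Ultrafilter I) (V : Fin l → Ultrafilter I)
    (hU : Function.Injective U) (hV : Function.Injective V)
    (hFU : F = ⨆ j, (U j : Filter I)) (hFV : F = ⨆ j, (V j : Filter I)) :
    Set.range U = Set.range V ∧
    IsLeast {n : ℕ | ∀ J : Fin (n + 1) → Set I,
        Pairwise (Disjoint on J) → (⋃ s, J s) = Set.univ →
        ∃ s, (J s)ᶜ ∈ F} m :=
  unique_finite_set_of_ultrafilters_general F U V hU hFU hFV
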